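/- For each n ≥ 1, the set {(x, 0, 0, …, 0) ∈ ℤ^n : x ≡ 0 (mod 2)} is a polyhedral set but is not an n-constraint (i.e., it cannot be expressed as a Boolean combination of n-atoms). -/

import Mathlib

/-- An elementary region in `ℤ^m`: a hyperplane `{z | a·z = b}`, an open half-space
`{z | a·z > b}`, or a congruence set `{z | a·z ≡ b (mod c)}` with `c > 0`. -/
def ElementaryRegion {m : ℕ} (E : Set (Fin m → ℤ)) : Prop :=
  (∃ (a : Fin m → ℤ) (b : ℤ), E = {z | (∑ i, a i * z i) = b}) ∨
  (∃ (a : Fin m → ℤ) (b : ℤ), E = {z | (∑ i, a i * z i) > b}) ∨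
  (∃ (a : Fin m → ℤ) (b c : ℤ), 0 < c ∧ E = {z | (∑ i, a i * z i) ≡ b [ZMOD c]})

/-- A basic polyhedral set is a finite intersection of elementary regions. -/
def BasicPolyhedral {m : ℕ} (B : Set (Fin m → ℤ)) : Prop :=
  ∃ (k : ℕ) (E : Fin k → Set (Fin m → ℤ)),
    (∀ i, ElementaryRegion (E i)) ∧ B = ⋂ i, E i

/-- A polyhedral set is a finite disjoint union of basic polyhedral sets. -/
def Polyhedral {m : ℕ} (P : Set (Fin m → ℤ)) : Prop :=
  ∃ (k : ℕ) (B : Fin k → Set (Fin m → ℤ)),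
    (∀ i, BasicPolyhedral (B i)) ∧
    (∀ i j, i ≠ j → Disjoint (B i) (B j)) ∧
    P = ⋃ i, B i

/-- An `n`-atom: a hyperplane or open half-space in `ℤ^n`. -/
def NAtom {n : ℕ} (E : Set (Fin n → ℤ)) : Prop :=
  (∃ (a : Fin n → ℤ) (b : ℤ), E = {v | (∑ i, a i * v i) = b}) ∨
  (∃ (a : Fin n → ℤ) (b : ℤ), E = {v | (∑ i, a i * v i) > b})

/-- An `n`-constraint: a Boolean combination of `n`-atoms. -/
inductive NConstraint {n : ℕ} : Set (Fin n → ℤ) → Prop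
  | atom (E : Set (Fin n → ℤ)) : NAtom E → NConstraint E
  | inter (A B : Set (Fin n → ℤ)) : NConstraint A → NConstraint B → NConstraint (A ∩ B)
  | union (A B : Set (Fin n → ℤ)) : NConstraint A → NConstraint B → NConstraint (A ∪ B)
  | compl (A : Set (Fin n → ℤ)) : NConstraint A → NConstraint Aᶜ

/-!
A hyperplane or open half-space of `ℤ^n` either contains a whole tail of a given line or misses
a whole tail of it, because an affine function of `t ∈ ℤ` is constant or tends to `±∞`. This
"eventually all in or all out" property survives intersections, unions and complements, so every
`n`-constraint has it along every line. The even points of the first axis alternate along that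
axis, hence form no `n`-constraint; yet they are one congruence region cut by the hyperplanes
`v i = 0`, hence polyhedral.
-/

open Filter

section Affine

variable {R : Type*} [Ring R] [LinearOrder R] [IsStrictOrderedRing R] [Archimedean R]

theorem eventually_lt_or_eventually_gt_affine (c b : R) {k : R} (hk : k ≠ 0) :
    (∀ᶠ t in atTop, c + t * k < b) ∨ ∀ᶠ t in atTop, b < c + t * k := by
  rcases hk.lt_or_gt with hk | hk
  · exact Or.inl <| (tendsto_atBot_add_const_left _ c
      (tendsto_id.atTop_mul_const_of_neg' hk)).eventually_lt_atBot b
  · exact Or.inr <| (tendsto_atTop_add_const_left _ c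
      (tendsto_id.atTop_mul_const' hk)).eventually_gt_atTop b

theorem eventuallyConst_affine_eq (c k b : R) :
    EventuallyConst (fun t : R => c + t * k = b) atTop := by
  rcases eq_or_ne k 0 with rfl | hk
  · simpa only [mul_zero, add_zero] using EventuallyConst.const (c = b)
  rw [eventuallyConst_pred]
  rcases eventually_lt_or_eventually_gt_affine c b hk with h | h
  · exact Or.inr (h.mono fun _ ht => ht.ne)
  · exact Or.inr (h.mono fun _ ht => ht.ne')

theorem eventuallyConst_affine_gt (c k b : R) :
    EventuallyConst (fun t : R => c + t * k > b) atTop := by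
  rcases eq_or_ne k 0 with rfl | hk
  · simpa only [mul_zero, add_zero] using EventuallyConst.const (c > b)
  rw [eventuallyConst_pred]
  rcases eventually_lt_or_eventually_gt_affine c b hk with h | h
  · exact Or.inr (h.mono fun _ ht => ht.not_gt)
  · exact Or.inl h

end Affine

theorem not_eventuallyConst_even : ¬ EventuallyConst (fun t : ℤ => Even t) atTop := by
  have hshift : Tendsto (fun t : ℤ => t + 1) atTop atTop :=
    tendsto_atTop_add_const_right _ 1 tendsto_id
  rw [eventuallyConst_pred]
  rintro (h | h) <;> obtain ⟨t, ht, ht1⟩ := (h.and (hshift.eventually h)).exists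
  · exact Int.even_add_one.1 ht1 ht
  · exact ht1 (Int.even_add_one.2 ht)

theorem NConstraint.eventuallyConst_line {n : ℕ} {A : Set (Fin n → ℤ)} (hA : NConstraint A)
    (p d : Fin n → ℤ) : EventuallyConst (fun t : ℤ => p + t • d ∈ A) atTop := by
  have hline : ∀ (a : Fin n → ℤ) (t : ℤ), ∑ i, a i * (p + t • d) i = a ⬝ᵥ p + t * a ⬝ᵥ d :=
    fun a t => by rw [← dotProduct, dotProduct_add, dotProduct_smul, smul_eq_mul]
  induction hA with
  | atom E hE =>
    rcases hE with ⟨a, b, rfl⟩ | ⟨a, b, rfl⟩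
    · simpa only [Set.mem_ofPred_eq, hline] using eventuallyConst_affine_eq (a ⬝ᵥ p) (a ⬝ᵥ d) b
    · simpa only [Set.mem_ofPred_eq, hline] using eventuallyConst_affine_gt (a ⬝ᵥ p) (a ⬝ᵥ d) b
  | inter A B _ _ ihA ihB => exact ihA.comp₂ (· ∧ ·) ihB
  | union A B _ _ ihA ihB => exact ihA.comp₂ (· ∨ ·) ihB
  | compl A _ ih => exact ih.comp Not

theorem elementaryRegion_setOf_apply_eq {m : ℕ} (i : Fin m) (b : ℤ) :
    ElementaryRegion {z : Fin m → ℤ | z i = b} :=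
  Or.inl ⟨Pi.single i 1, b, by ext; simp [Pi.single_apply]⟩

theorem elementaryRegion_setOf_apply_modEq {m : ℕ} (i : Fin m) (b : ℤ) {c : ℤ} (hc : 0 < c) :
    ElementaryRegion {z : Fin m → ℤ | z i ≡ b [ZMOD c]} :=
  Or.inr <| Or.inr ⟨Pi.single i 1, b, c, hc, by ext; simp [Pi.single_apply]⟩

theorem BasicPolyhedral.polyhedral {m : ℕ} {B : Set (Fin m → ℤ)} (hB : BasicPolyhedral B) :
    Polyhedral B :=
  ⟨1, fun _ => B, fun _ => hB, fun i j hij => absurd (Subsingleton.elim i j) hij,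
    (Set.iUnion_const B).symm⟩

theorem basicPolyhedral_even_axis (n : ℕ) (hn : 1 ≤ n) :
    BasicPolyhedral {v : Fin n → ℤ | (2 ∣ v ⟨0, hn⟩) ∧ ∀ i : Fin n, (i : ℕ) ≠ 0 → v i = 0} := by
  refine ⟨n, fun i => if (i : ℕ) = 0 then {z | z i ≡ 0 [ZMOD 2]} else {z | z i = 0},
    fun i => ?_, ?_⟩
  · dsimp only
    split_ifs
    · exact elementaryRegion_setOf_apply_modEq i 0 two_pos
    · exact elementaryRegion_setOf_apply_eq i 0
  ext v
  simp only [Set.mem_iInter, apply_ite (v ∈ ·), Set.mem_ofPred_eq, Int.modEq_zero_iff_dvd]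
  refine ⟨fun ⟨h0, hi⟩ i => ?_,
    fun h => ⟨by simpa using h ⟨0, hn⟩, fun i hi0 => by simpa [hi0] using h i⟩⟩
  split_ifs with hi0
  · rwa [show i = ⟨0, hn⟩ from Fin.ext hi0]
  · exact hi i hi0

/-- For each `n ≥ 1`, the set `{(x,0,…,0) ∈ ℤ^n : x ≡ 0 (mod 2)}` is polyhedral
but is not an `n`-constraint. -/
theorem polyhedral_not_nconstraint (n : ℕ) (hn : 1 ≤ n) :
    Polyhedral {v : Fin n → ℤ | (2 ∣ v ⟨0, hn⟩) ∧ ∀ i : Fin n, (i : ℕ) ≠ 0 → v i = 0} ∧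
    ¬ NConstraint {v : Fin n → ℤ | (2 ∣ v ⟨0, hn⟩) ∧ ∀ i : Fin n, (i : ℕ) ≠ 0 → v i = 0} := by
  refine ⟨(basicPolyhedral_even_axis n hn).polyhedral, fun hS => not_eventuallyConst_even ?_⟩
  have haxis : ∀ t : ℤ, (0 + t • Pi.single ⟨0, hn⟩ 1 ∈
      {v : Fin n → ℤ | (2 ∣ v ⟨0, hn⟩) ∧ ∀ i : Fin n, (i : ℕ) ≠ 0 → v i = 0}) ↔ Even t :=
    fun t => by simp +contextual [Fin.ext_iff, even_iff_two_dvd]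
  simpa only [haxis] using hS.eventuallyConst_line 0 (Pi.single ⟨0, hn⟩ 1)
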